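/- Let C be a locally finite EI category of type A∞ over a field k of characteristic 0, satisfying the transitivity and bijectivity conditions. Then every finitely generated kC-module is Noetherian, i.e., all of its kC-submodules are finitely generated. -/

import Mathlib

/-- A skeletal locally finite EI category with objects the non-negative
integers and `Hom i j` nonempty iff `i ≤ j`. -/
structure EICat where
  Hom : ℕ → ℕ → Type
  idm : ∀ i, Hom i i
  comp : ∀ {i j l : ℕ}, Hom j l → Hom i j → Hom i l
  id_comp : ∀ {i j : ℕ} (f : Hom i j), comp (idm j) f = f
  comp_id : ∀ {i j : ℕ} (f : Hom i j), comp f (idm i) = f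
  assoc : ∀ {i j l m : ℕ} (f : Hom l m) (g : Hom j l) (h : Hom i j),
    comp (comp f g) h = comp f (comp g h)
  homFinite : ∀ i j, Finite (Hom i j)
  ei : ∀ (i : ℕ) (f : Hom i i), ∃ g : Hom i i, comp f g = idm i ∧ comp g f = idm i
  nonempty_iff : ∀ i j, Nonempty (Hom i j) ↔ i ≤ j

/-- A morphism is an isomorphism. -/
def EICat.IsIso (C : EICat) {i j : ℕ} (f : C.Hom i j) : Prop :=
  ∃ g : C.Hom j i, C.comp f g = C.idm j ∧ C.comp g f = C.idm i

/-- A morphism is unfactorizable. -/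
def EICat.Unfact (C : EICat) {i j : ℕ} (f : C.Hom i j) : Prop :=
  ¬ C.IsIso f ∧ ∀ (l : ℕ) (b₂ : C.Hom i l) (b₁ : C.Hom l j),
    f = C.comp b₁ b₂ → C.IsIso b₁ ∨ C.IsIso b₂

/-- `C` is of type `A∞`: the underlying quiver of unfactorizable morphisms is
`0 → 1 → 2 → ⋯`. -/
def EICat.TypeAInf (C : EICat) : Prop :=
  ∀ i j : ℕ, (∃ f : C.Hom i j, C.Unfact f) ↔ j = i + 1

/-- The transitivity condition: `G_{i+1}` acts transitively on `C(i, i+1)`. -/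
def EICat.TransCond (C : EICat) : Prop :=
  ∀ (i : ℕ) (f g : C.Hom i (i + 1)), ∃ e : C.Hom (i + 1) (i + 1), C.comp e f = g

/-- The chosen morphism `α_{i,j} = α_{j-1} ⋯ α_{i+1} α_i ∈ C(i,j)`, built from a
choice of morphisms `α_j ∈ C(j, j+1)`. -/
def EICat.alph (C : EICat) (α : ∀ j, C.Hom j (j + 1)) (i : ℕ) :
    ∀ {j : ℕ}, i ≤ j → C.Hom i j :=
  fun {j} h => Nat.leRecOn h (fun {n} p => C.comp (α n) p) (C.idm i)

/-- `γ, γ' ∈ C(i,j)` lie in the same `H_{i,j}`-orbit, where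
`H_{i,j} = Stab_{G_j}(α_{i,j})`. -/
def EICat.orbRel (C : EICat) (α : ∀ j, C.Hom j (j + 1)) {i j : ℕ} (hij : i ≤ j)
    (γ γ' : C.Hom i j) : Prop :=
  ∃ h : C.Hom j j, C.comp h (C.alph α i hij) = C.alph α i hij ∧ C.comp h γ = γ'

/-- `δ, δ' ∈ C(i,j+1)` lie in the same `H_{i,j+1}`-orbit, where
`α_{i,j+1} = α_j α_{i,j}`. -/
def EICat.orbRelS (C : EICat) (α : ∀ j, C.Hom j (j + 1)) {i j : ℕ} (hij : i ≤ j)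
    (δ δ' : C.Hom i (j + 1)) : Prop :=
  ∃ h : C.Hom (j + 1) (j + 1),
    C.comp h (C.comp (α j) (C.alph α i hij)) = C.comp (α j) (C.alph α i hij) ∧
    C.comp h δ = δ'

/-- The bijectivity condition: for each `i`, the induced maps
`μ_{i,j} : H_{i,j}\C(i,j) → H_{i,j+1}\C(i,j+1)` are bijective for all
sufficiently large `j`. -/
def EICat.BijCond (C : EICat) (α : ∀ j, C.Hom j (j + 1)) : Prop :=
  ∀ i : ℕ, ∃ N : ℕ, ∀ (j : ℕ) (hij : i ≤ j), N ≤ j →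
    (∀ γ γ' : C.Hom i j,
      C.orbRelS α hij (C.comp (α j) γ) (C.comp (α j) γ') → C.orbRel α hij γ γ') ∧
    (∀ δ : C.Hom i (j + 1), ∃ γ : C.Hom i j, C.orbRelS α hij (C.comp (α j) γ) δ)

/-- A `kC`-module: a (covariant) functor from `C` to `k`-modules. -/
structure CMod (k : Type) [CommRing k] (C : EICat) where
  V : ℕ → Type
  [acg : ∀ i, AddCommGroup (V i)]
  [mod : ∀ i, Module k (V i)]
  act : ∀ {i j : ℕ}, C.Hom i j → V i →ₗ[k] V j
  act_id : ∀ i : ℕ, act (C.idm i) = LinearMap.id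
  act_comp : ∀ {i j l : ℕ} (f : C.Hom j l) (g : C.Hom i j),
    act (C.comp f g) = (act f).comp (act g)

attribute [instance] CMod.acg CMod.mod

variable {k : Type} [CommRing k] {C : EICat}

/-- A family of `k`-submodules `W i ⊆ V i` is a `kC`-submodule if it is closed
under the action of all morphisms of `C`. -/
def CMod.Closed (M : CMod k C) (W : ∀ i, Submodule k (M.V i)) : Prop :=
  ∀ (i j : ℕ) (f : C.Hom i j) (x : M.V i), x ∈ W i → M.act f x ∈ W j

/-- The `kC`-module `M` is finitely generated: there is a finite family of
homogeneous elements contained in no proper `kC`-submodule. -/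
def CMod.FG (M : CMod k C) : Prop :=
  ∃ (n : ℕ) (d : Fin n → ℕ) (v : ∀ m : Fin n, M.V (d m)),
    ∀ W : ∀ i, Submodule k (M.V i), M.Closed W →
      (∀ m : Fin n, v m ∈ W (d m)) → ∀ i, W i = ⊤

/-- A `kC`-submodule `W` of `M` is finitely generated: it contains a finite
family of homogeneous elements not all contained in any smaller
`kC`-submodule. -/
def CMod.SubFG (M : CMod k C) (W : ∀ i, Submodule k (M.V i)) : Prop :=
  ∃ (n : ℕ) (d : Fin n → ℕ) (v : ∀ m : Fin n, M.V (d m)),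
    (∀ m : Fin n, v m ∈ W (d m)) ∧
    ∀ W' : ∀ i, Submodule k (M.V i), M.Closed W' →
      (∀ m : Fin n, v m ∈ W' (d m)) → ∀ i, W i ≤ W' i

/-- The `kC`-module `M` is Noetherian: every `kC`-submodule is finitely
generated. -/
def CMod.Noetherian (M : CMod k C) : Prop :=
  ∀ W : ∀ i, Submodule k (M.V i), M.Closed W → M.SubFG W

/-!
Pull a submodule of `M` back to a finite direct sum of free modules `kC(i,-)`. It suffices that
every submodule `U` of `kC(i,-)` satisfies `U(j+1) = kC(j,j+1) · U(j)` for large `j`: a degreewise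
finite-dimensional module all of whose submodules have this property is Noetherian, and the
property passes to finite direct sums and quotients.

For `U ≤ kC(i,-)` let `c_j` be the dimension of the `H_{i,j}`-invariant vectors of `U(j)`. Pushing
along `α_j` and averaging over `H_{i,j+1}` is injective on them (injectivity of `μ_{i,j}`, and
characteristic 0), so `c_j` is eventually nondecreasing; it is bounded by the dimension of the
`H_{i,j}`-invariants of `kC(i,j)`, which is eventually nonincreasing (surjectivity of `μ_{i,j}`).
Once `c_{j+1} = c_j`, `U(j+1)` and its submodule generated by `U(j)` have the same
`H_{i,j+1}`-invariants. Both are `G_{j+1}`-stable, `G_{j+1}` acts transitively on `C(i,j+1)`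
(type `A∞` and the transitivity condition), and in a transitive permutation module over a field of
characteristic 0 every nonzero subrepresentation has a nonzero vector fixed by a point stabilizer;
by Maschke's theorem the two submodules coincide.
-/

open Module MulAction Function

section PermutationModules

variable {k : Type*} [Field k]

theorem finrank_le_finrank_of_mapsTo {V W : Type*} [AddCommGroup V] [Module k V]
    [AddCommGroup W] [Module k W] (f : V →ₗ[k] W) {p : Submodule k V} {q : Submodule k W}
    [FiniteDimensional k q] (hpq : p ≤ q.comap f) (hinj : ∀ x ∈ p, f x = 0 → x = 0) :
    finrank k p ≤ finrank k q :=
  LinearMap.finrank_le_finrank_of_injective (f := f.restrict hpq) <|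
    (injective_iff_map_eq_zero _).2 fun x hx =>
      Subtype.ext (hinj x x.2 (congrArg Subtype.val hx))

variable (k) in
noncomputable def permRep (G X : Type*) [Group G] [MulAction G X] :
    Representation k G (X →₀ k) where
  toFun g := Finsupp.lmapDomain k k (g • ·)
  map_one' := by ext; simp
  map_mul' g h := by ext; simp [mul_smul]

variable (k) in
noncomputable abbrev permInvariants (G X : Type*) [Group G] [MulAction G X] :
    Submodule k (X →₀ k) :=
  (permRep k G X).invariants

variable {G G' X Y : Type*} [Group G] [Group G'] [MulAction G X] [MulAction G' Y]

@[simp]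
lemma permRep_apply_apply (g : G) (f : X →₀ k) (x : X) :
    permRep k G X g f x = f (g⁻¹ • x) := by
  conv_lhs => rw [← smul_inv_smul g x]
  exact Finsupp.mapDomain_apply (MulAction.injective g) f _

lemma mem_permInvariants {f : X →₀ k} :
    f ∈ permInvariants k G X ↔ ∀ (g : G) (x : X), f (g • x) = f x := by
  refine ⟨fun hf g x => ?_, fun hf g => Finsupp.ext fun x => ?_⟩
  · simpa using (DFunLike.congr_fun (hf g) (g • x)).symm
  · rw [permRep_apply_apply, hf]

lemma norm_permRep_apply [Fintype G] (f : X →₀ k) (x : X) :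
    (permRep k G X).norm f x = ∑ g : G, f (g⁻¹ • x) := by
  simp [Representation.norm, Finsupp.finsetSum_apply]

lemma norm_permRep_mem [Fintype G] {S : Submodule k (X →₀ k)}
    (hS : ∀ g : G, ∀ f ∈ S, permRep k G X g f ∈ S) {f : X →₀ k} (hf : f ∈ S) :
    (permRep k G X).norm f ∈ S := by
  rw [Representation.norm, LinearMap.sum_apply]
  exact Submodule.sum_mem _ fun g _ => hS g f hf

lemma norm_permRep_mem_permInvariants [Fintype G] (f : X →₀ k) :
    (permRep k G X).norm f ∈ permInvariants k G X :=
  fun g => Representation.self_norm_apply _ g f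

theorem Subrepresentation.eq_bot_of_disjoint_permInvariants [Finite G] [CharZero k]
    [IsPretransitive G X] (x₀ : X) (S : Subrepresentation (permRep k G X))
    (hS : Disjoint S.toSubmodule (permInvariants k (stabilizer G x₀) X)) : S = ⊥ := by
  have := Fintype.ofFinite (stabilizer G x₀)
  refine Subrepresentation.toSubmodule_injective (Submodule.eq_bot_iff _ |>.2 fun t ht => ?_)
  by_contra ht0
  obtain ⟨x, hx⟩ := Finsupp.ne_iff.1 ht0
  obtain ⟨g, rfl⟩ := exists_smul_eq G x x₀
  set s := permRep k G X g t
  have hs : s ∈ S.toSubmodule := S.apply_mem_toSubmodule g ht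
  have hnorm : (permRep k (stabilizer G (g • x)) X).norm s = 0 :=
    Submodule.disjoint_def.1 hS _
      (norm_permRep_mem (G := stabilizer G (g • x))
        (fun h f hf => S.apply_mem_toSubmodule (h : G) hf) hs)
      (norm_permRep_mem_permInvariants s)
  have hfix : ∀ h : stabilizer G (g • x), h⁻¹ • (g • x) = g • x := fun h =>
    mem_stabilizer_iff.1 (h⁻¹).2
  have := DFunLike.congr_fun hnorm (g • x)
  simp [norm_permRep_apply, hfix, s] at this
  exact hx this

theorem Subrepresentation.le_of_inf_permInvariants_le [Finite G] [CharZero k]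
    [IsPretransitive G X] (x₀ : X) {A B : Subrepresentation (permRep k G X)} (hAB : A ≤ B)
    (h : B.toSubmodule ⊓ permInvariants k (stabilizer G x₀) X ≤ A.toSubmodule) : B ≤ A := by
  obtain ⟨A', hA'⟩ := exists_isCompl A
  have hBA' : B ⊓ A' = ⊥ := by
    refine eq_bot_of_disjoint_permInvariants x₀ _ (Submodule.disjoint_def.2 fun w hw hwinv => ?_)
    have hw0 : w ∈ (A ⊓ A').toSubmodule := ⟨h ⟨hw.1, hwinv⟩, hw.2⟩
    rwa [hA'.inf_eq_bot] at hw0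
  intro b hb
  obtain ⟨a, ha, a', ha', rfl⟩ := Submodule.mem_sup.1
    (show b ∈ (A ⊔ A').toSubmodule by rw [hA'.sup_eq_top]; trivial)
  have ha'B : a' ∈ (B ⊓ A').toSubmodule := ⟨by simpa using B.toSubmodule.sub_mem hb (hAB ha), ha'⟩
  rw [hBA'] at ha'B
  show a + a' ∈ A.toSubmodule
  rwa [show a' = 0 from ha'B, add_zero]

theorem norm_permRep_mapDomain_ne_zero [Fintype G'] [CharZero k] {φ : X → Y}
    (hφ : ∀ (x x' : X) (h' : G'), h' • φ x = φ x' → ∃ h : G, h • x = x')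
    {u : X →₀ k} (hu : u ∈ permInvariants k G X) (hu0 : u ≠ 0) :
    (permRep k G' Y).norm (Finsupp.mapDomain φ u) ≠ 0 := by
  classical
  -- At `φ x₀`, where `u x₀ ≠ 0`, every contribution equals `u x₀` because `φ` reflects orbits.
  obtain ⟨x₀, hx₀⟩ := Finsupp.ne_iff.1 hu0
  let n (h' : G') : ℕ := (u.support.filter fun x => φ x = h'⁻¹ • φ x₀).card
  have hcoeff (h' : G') : Finsupp.mapDomain φ u (h'⁻¹ • φ x₀) = n h' • u x₀ := by
    simp only [Finsupp.mapDomain, Finsupp.sum, Finsupp.finsetSum_apply, Finsupp.single_apply,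
      ← Finset.sum_filter]
    rw [← Finset.sum_const]
    refine Finset.sum_congr rfl fun x hx => ?_
    obtain ⟨h, rfl⟩ := hφ x x₀ h' (by rw [(Finset.mem_filter.1 hx).2, smul_inv_smul])
    exact (mem_permInvariants.1 hu h x).symm
  have hn : 0 < ∑ h', n h' :=
    Finset.sum_pos' (fun _ _ => Nat.zero_le _) ⟨1, Finset.mem_univ _,
      Finset.card_pos.2 ⟨x₀, Finset.mem_filter.2 ⟨Finsupp.mem_support_iff.2 hx₀, by simp⟩⟩⟩
  intro h0
  have := DFunLike.congr_fun h0 (φ x₀)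
  simp only [norm_permRep_apply, hcoeff, ← Finset.sum_smul] at this
  exact hx₀ ((smul_eq_zero.1 this).resolve_left hn.ne')

theorem finrank_inf_permInvariants_le [Finite G'] [Finite Y] [CharZero k] {φ : X → Y}
    (hφ : ∀ (x x' : X) (h' : G'), h' • φ x = φ x' → ∃ h : G, h • x = x')
    {p : Submodule k (X →₀ k)} {q : Submodule k (Y →₀ k)}
    (hq : ∀ (h' : G'), ∀ y ∈ q, permRep k G' Y h' y ∈ q)
    (hpq : ∀ u ∈ p, Finsupp.mapDomain φ u ∈ q) :
    finrank k ↥(p ⊓ permInvariants k G X) ≤ finrank k ↥(q ⊓ permInvariants k G' Y) := by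
  have := Fintype.ofFinite G'
  refine finrank_le_finrank_of_mapsTo
    ((permRep k G' Y).norm ∘ₗ Finsupp.lmapDomain k k φ)
    (fun u hu => ⟨norm_permRep_mem hq (hpq u hu.1),
      norm_permRep_mem_permInvariants _⟩)
    (fun u hu h0 => ?_)
  by_contra hne
  exact norm_permRep_mapDomain_ne_zero hφ hu.2 hne h0

theorem finrank_permInvariants_le [Finite X] [Finite Y] {φ : X → Y}
    (hlift : ∀ h : G, ∃ h' : G', ∀ x, φ (h • x) = h' • φ x)
    (hsurj : ∀ y, ∃ (x : X) (h' : G'), h' • φ x = y) :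
    finrank k (permInvariants k G' Y) ≤ finrank k (permInvariants k G X) := by
  let restrict : (Y →₀ k) →ₗ[k] (X →₀ k) :=
    (Finsupp.linearEquivFunOnFinite k k X).symm.toLinearMap ∘ₗ LinearMap.funLeft k k φ ∘ₗ
      Finsupp.lcoeFun
  have restrict_apply (f : Y →₀ k) (x : X) : restrict f x = f (φ x) := rfl
  refine finrank_le_finrank_of_mapsTo restrict (fun f hf => ?_) (fun f hf h0 => ?_)
  · refine mem_permInvariants.2 fun h x => ?_
    obtain ⟨h', hh'⟩ := hlift h
    rw [restrict_apply, restrict_apply, hh', mem_permInvariants.1 hf]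
  · refine Finsupp.ext fun y => ?_
    obtain ⟨x, h', rfl⟩ := hsurj y
    rw [mem_permInvariants.1 hf, ← restrict_apply, h0, Finsupp.zero_apply, Finsupp.zero_apply]

end PermutationModules

namespace EICat

variable {C : EICat}

noncomputable instance instGroupEnd (j : ℕ) : Group (C.Hom j j) where
  mul := C.comp
  one := C.idm j
  inv a := (C.ei j a).choose
  mul_assoc := C.assoc
  one_mul := C.id_comp
  mul_one := C.comp_id
  inv_mul_cancel a := (C.ei j a).choose_spec.2

instance instMulActionEnd (i j : ℕ) : MulAction (C.Hom j j) (C.Hom i j) where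
  smul := C.comp
  one_smul := C.id_comp
  mul_smul := C.assoc

instance (i j : ℕ) : Finite (C.Hom i j) := C.homFinite i j

lemma smul_def {i j : ℕ} (e : C.Hom j j) (γ : C.Hom i j) : e • γ = C.comp e γ := rfl

lemma not_isIso_of_lt {i j : ℕ} (hij : i < j) (f : C.Hom i j) : ¬ C.IsIso f := fun ⟨g, _⟩ =>
  absurd ((C.nonempty_iff j i).1 ⟨g⟩) hij.not_ge

theorem exists_comp_of_typeAInf (hA : C.TypeAInf) {i j : ℕ} (hij : i ≤ j)
    (f : C.Hom i (j + 1)) : ∃ (g : C.Hom j (j + 1)) (h : C.Hom i j), f = C.comp g h := by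
  induction hd : j - i using Nat.strong_induction_on generalizing i with
  | _ d IH =>
  rcases hij.eq_or_lt with rfl | hlt
  · exact ⟨f, C.idm i, (C.comp_id f).symm⟩
  -- Otherwise `f` factors through some `l` with neither factor invertible, and `i < l < j + 1`
  -- because all endomorphisms are invertible.
  have hnf : ¬ C.Unfact f := fun hf => by have := (hA i (j + 1)).1 ⟨f, hf⟩; omega
  simp only [Unfact, not_and, not_forall, not_or] at hnf
  obtain ⟨l, b₂, b₁, rfl, hb₁, hb₂⟩ := hnf (not_isIso_of_lt (by omega) f)
  have hil : i < l := ((C.nonempty_iff i l).1 ⟨b₂⟩).lt_of_ne fun h => by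
    subst h; exact hb₂ (C.ei _ b₂)
  have hlj : l < j + 1 := ((C.nonempty_iff l (j + 1)).1 ⟨b₁⟩).lt_of_ne fun h => by
    subst h; exact hb₁ (C.ei _ b₁)
  obtain ⟨g, h, rfl⟩ := IH (j - l) (by omega) (by omega) b₁ rfl
  exact ⟨g, C.comp h b₂, C.assoc g h b₂⟩

theorem isPretransitive_of_typeAInf (hA : C.TypeAInf) (hT : C.TransCond) {i j : ℕ} (hij : i ≤ j) :
    IsPretransitive (C.Hom j j) (C.Hom i j) := by
  induction j, hij using Nat.le_induction with
  | base => exact ⟨fun f f' => ⟨f' * f⁻¹, inv_mul_cancel_right f' f⟩⟩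
  | succ j hij IH =>
    refine ⟨fun f f' => ?_⟩
    obtain ⟨g, h, rfl⟩ := exists_comp_of_typeAInf hA hij f
    obtain ⟨g', h', rfl⟩ := exists_comp_of_typeAInf hA hij f'
    obtain ⟨e, rfl⟩ := exists_smul_eq (C.Hom j j) h h'
    obtain ⟨e', he'⟩ := hT j g (C.comp g' e)
    exact ⟨e', by rw [smul_def, smul_def, ← C.assoc, he', C.assoc]⟩

lemma alph_succ (α : ∀ j, C.Hom j (j + 1)) {i j : ℕ} (hij : i ≤ j) :
    C.alph α i (hij.trans j.le_succ) = C.comp (α j) (C.alph α i hij) :=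
  Nat.leRecOn_succ hij _

lemma orbRel_iff (α : ∀ j, C.Hom j (j + 1)) {i j : ℕ} (hij : i ≤ j) (γ γ' : C.Hom i j) :
    C.orbRel α hij γ γ' ↔ ∃ h : stabilizer (C.Hom j j) (C.alph α i hij), h • γ = γ' :=
  ⟨fun ⟨h, hh, hγ⟩ => ⟨⟨h, hh⟩, hγ⟩, fun ⟨h, hγ⟩ => ⟨h, h.2, hγ⟩⟩

lemma orbRelS_iff (α : ∀ j, C.Hom j (j + 1)) {i j : ℕ} (hij : i ≤ j) (δ δ' : C.Hom i (j + 1)) :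
    C.orbRelS α hij δ δ' ↔
      ∃ h : stabilizer (C.Hom (j + 1) (j + 1)) (C.alph α i (hij.trans j.le_succ)), h • δ = δ' := by
  rw [alph_succ α hij]
  exact ⟨fun ⟨h, hh, hδ⟩ => ⟨⟨h, hh⟩, hδ⟩, fun ⟨h, hδ⟩ => ⟨h, h.2, hδ⟩⟩

end EICat

namespace CMod

def spanSucc (M : CMod k C) (W : ∀ i, Submodule k (M.V i)) (j : ℕ) :
    Submodule k (M.V (j + 1)) :=
  ⨆ f : C.Hom j (j + 1), (W j).map (M.act f)

def EventuallyGenerated (M : CMod k C) : Prop :=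
  ∀ W : ∀ i, Submodule k (M.V i), M.Closed W →
    ∃ N, ∀ j, N ≤ j → W (j + 1) ≤ M.spanSucc W j

variable {M N P : CMod k C}

lemma spanSucc_le_iff {W : ∀ i, Submodule k (M.V i)} {j : ℕ} {S : Submodule k (M.V (j + 1))} :
    M.spanSucc W j ≤ S ↔ ∀ (f : C.Hom j (j + 1)), ∀ x ∈ W j, M.act f x ∈ S := by
  simp only [spanSucc, iSup_le_iff, Submodule.map_le_iff_le_comap]
  rfl

lemma act_mem_spanSucc {W : ∀ i, Submodule k (M.V i)} {j : ℕ} (f : C.Hom j (j + 1))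
    {x : M.V j} (hx : x ∈ W j) : M.act f x ∈ M.spanSucc W j :=
  Submodule.mem_iSup_of_mem f (Submodule.mem_map_of_mem hx)

lemma spanSucc_mono {W W' : ∀ i, Submodule k (M.V i)} {j : ℕ} (h : W j ≤ W' j) :
    M.spanSucc W j ≤ M.spanSucc W' j :=
  spanSucc_le_iff.2 fun f _ hx => act_mem_spanSucc f (h hx)

lemma Closed.spanSucc_le {W : ∀ i, Submodule k (M.V i)} (hW : M.Closed W) (j : ℕ) :
    M.spanSucc W j ≤ W (j + 1) :=
  spanSucc_le_iff.2 fun f x hx => hW j (j + 1) f x hx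

lemma act_mem_spanSucc_of_mem {W : ∀ i, Submodule k (M.V i)} {j : ℕ}
    (e : C.Hom (j + 1) (j + 1)) {x : M.V (j + 1)} (hx : x ∈ M.spanSucc W j) :
    M.act e x ∈ M.spanSucc W j := by
  have hle : M.spanSucc W j ≤ (M.spanSucc W j).comap (M.act e) :=
    spanSucc_le_iff.2 fun f y hy => by
      rw [Submodule.mem_comap, ← LinearMap.comp_apply, ← M.act_comp]
      exact act_mem_spanSucc _ hy
  exact hle hx

structure Hom (M N : CMod k C) where
  app : ∀ j, M.V j →ₗ[k] N.V j
  naturality : ∀ {i j : ℕ} (f : C.Hom i j), app j ∘ₗ M.act f = N.act f ∘ₗ app i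

lemma Hom.app_act (φ : M.Hom N) {i j : ℕ} (f : C.Hom i j) (x : M.V i) :
    φ.app j (M.act f x) = N.act f (φ.app i x) :=
  LinearMap.congr_fun (φ.naturality f) x

lemma Closed.comap {W : ∀ i, Submodule k (N.V i)} (hW : N.Closed W) (φ : M.Hom N) :
    M.Closed fun j => (W j).comap (φ.app j) := fun i j f x hx => by
  simpa only [Submodule.mem_comap, φ.app_act] using hW i j f _ hx

lemma Closed.map {W : ∀ i, Submodule k (M.V i)} (hW : M.Closed W) (φ : M.Hom N) :
    N.Closed fun j => (W j).map (φ.app j) := by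
  rintro i j f _ ⟨x, hx, rfl⟩
  exact ⟨M.act f x, hW i j f x hx, φ.app_act f x⟩

lemma map_spanSucc (φ : M.Hom N) (W : ∀ i, Submodule k (M.V i)) (j : ℕ) :
    (M.spanSucc W j).map (φ.app (j + 1)) = N.spanSucc (fun j => (W j).map (φ.app j)) j := by
  refine le_antisymm ?_ (spanSucc_le_iff.2 ?_)
  · refine Submodule.map_le_iff_le_comap.2 (spanSucc_le_iff.2 fun f x hx => ?_)
    rw [Submodule.mem_comap, φ.app_act]
    exact act_mem_spanSucc f (Submodule.mem_map_of_mem hx)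
  · rintro f _ ⟨x, hx, rfl⟩
    rw [← φ.app_act]
    exact Submodule.mem_map_of_mem (act_mem_spanSucc f hx)

theorem EventuallyGenerated.of_surjective (hM : M.EventuallyGenerated) (φ : M.Hom N)
    (hφ : ∀ j, Surjective (φ.app j)) : N.EventuallyGenerated := by
  intro W hW
  obtain ⟨n, hn⟩ := hM _ (hW.comap φ)
  refine ⟨n, fun j hj => ?_⟩
  have hWj (j : ℕ) : ((W j).comap (φ.app j)).map (φ.app j) = W j :=
    Submodule.map_comap_eq_of_surjective (hφ j) _
  calc W (j + 1) = ((W (j + 1)).comap (φ.app (j + 1))).map (φ.app (j + 1)) := (hWj _).symm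
    _ ≤ (M.spanSucc (fun j => (W j).comap (φ.app j)) j).map (φ.app (j + 1)) :=
        Submodule.map_mono (hn j hj)
    _ ≤ N.spanSucc W j := by
        rw [map_spanSucc]
        simp only [hWj, le_rfl]

abbrev prod (M N : CMod k C) : CMod k C where
  V j := M.V j × N.V j
  act f := (M.act f).prodMap (N.act f)
  act_id i := by simp [M.act_id, N.act_id]
  act_comp f g := by simp [M.act_comp, N.act_comp, LinearMap.prodMap_comp]

def inl : M.Hom (M.prod N) where
  app _ := LinearMap.inl k _ _
  naturality f := LinearMap.ext fun _ => Prod.ext rfl (map_zero (N.act f)).symm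

def snd : (M.prod N).Hom N where
  app _ := LinearMap.snd k _ _
  naturality _ := rfl

def Hom.coprod (φ : M.Hom P) (ψ : N.Hom P) : (M.prod N).Hom P where
  app j := (φ.app j).coprod (ψ.app j)
  naturality f := LinearMap.ext fun x => by
    change φ.app _ (M.act f x.1) + ψ.app _ (N.act f x.2) = P.act f (φ.app _ x.1 + ψ.app _ x.2)
    rw [map_add, φ.app_act, ψ.app_act]

theorem EventuallyGenerated.prod (hM : M.EventuallyGenerated) (hN : N.EventuallyGenerated) :
    (M.prod N).EventuallyGenerated := by
  intro W hW
  obtain ⟨n₁, h₁⟩ := hM _ (hW.comap inl)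
  obtain ⟨n₂, h₂⟩ := hN _ (hW.map snd)
  refine ⟨max n₁ n₂, fun j hj w hw => ?_⟩
  obtain ⟨v, hv, hvw⟩ := (map_spanSucc snd W j).ge (h₂ j (le_of_max_le_right hj) ⟨w, hw, rfl⟩)
  have hwv : (inl : M.Hom (M.prod N)).app (j + 1) (w - v).1 = w - v := by
    change ((w - v).1, 0) = w - v
    exact Prod.ext rfl (sub_eq_zero.2 hvw.symm).symm
  have hfst : (w - v).1 ∈ M.spanSucc (fun j => (W j).comap (inl.app j)) j := by
    refine h₁ j (le_of_max_le_left hj) ?_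
    rw [Submodule.mem_comap, hwv]
    exact (W (j + 1)).sub_mem hw (hW.spanSucc_le j hv)
  have hmem : w - v ∈ (M.prod N).spanSucc W j := by
    rw [← hwv]
    exact spanSucc_mono (Submodule.map_comap_le _ _)
      ((map_spanSucc inl _ j).le (Submodule.mem_map_of_mem hfst))
  simpa using add_mem hmem hv

variable (k C) in
noncomputable abbrev free (i : ℕ) : CMod k C where
  V j := C.Hom i j →₀ k
  act f := Finsupp.lmapDomain k k (C.comp f)
  act_id j := by ext; simp [C.id_comp]
  act_comp f g := by ext; simp [C.assoc]

noncomputable def freeLift {i : ℕ} (x : M.V i) : (free k C i).Hom M where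
  app j := Finsupp.linearCombination k fun f : C.Hom i j => M.act f x
  naturality f := by ext; simp [free, M.act_comp]

lemma freeLift_single_idm {i : ℕ} (x : M.V i) :
    (freeLift x).app i (Finsupp.single (C.idm i) 1) = x := by
  simp [freeLift, M.act_id]

theorem exists_hom_eventuallyGenerated (hfree : ∀ i, (free k C i).EventuallyGenerated)
    (M : CMod k C) {n : ℕ} (d : Fin n → ℕ) (v : ∀ m, M.V (d m)) :
    ∃ (P : CMod k C) (φ : P.Hom M), P.EventuallyGenerated ∧
      ∀ m, v m ∈ LinearMap.range (φ.app (d m)) := by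
  induction n with
  | zero => exact ⟨free k C 0, freeLift (0 : M.V 0), hfree 0, fun m => m.elim0⟩
  | succ n ih =>
    obtain ⟨P, φ, hP, hφ⟩ := ih (fun m => d m.succ) (fun m => v m.succ)
    refine ⟨(free k C (d 0)).prod P, (freeLift (v 0)).coprod φ, (hfree _).prod hP,
      Fin.cases ⟨(Finsupp.single (C.idm _) 1, 0), ?_⟩ fun m => ?_⟩
    · simpa [Hom.coprod] using freeLift_single_idm (v 0)
    · obtain ⟨p, hp⟩ := hφ m
      exact ⟨(0, p), by simpa [Hom.coprod] using hp⟩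

theorem FG.eventuallyGenerated (hfree : ∀ i, (free k C i).EventuallyGenerated) (hM : M.FG) :
    M.EventuallyGenerated := by
  obtain ⟨n, d, v, hgen⟩ := hM
  obtain ⟨P, φ, hP, hv⟩ := exists_hom_eventuallyGenerated hfree M d v
  have hrange : M.Closed fun j => LinearMap.range (φ.app j) := by
    simpa only [LinearMap.range_eq_map] using
      Closed.map (W := fun _ => ⊤) (fun _ _ _ _ _ => Submodule.mem_top) φ
  exact hP.of_surjective φ fun j => LinearMap.range_eq_top.1 (hgen _ hrange hv j)

theorem FG.finite (hM : M.FG) (j : ℕ) : Module.Finite k (M.V j) := by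
  obtain ⟨n, d, v, hgen⟩ := hM
  let S (j : ℕ) : Submodule k (M.V j) := Submodule.span k
    (Set.range fun p : Σ m, C.Hom (d m) j => M.act p.2 (v p.1))
  have hS : M.Closed S := by
    intro i j f x hx
    refine (Submodule.span_le.2 ?_ : S i ≤ (S j).comap (M.act f)) hx
    rintro _ ⟨⟨m, g⟩, rfl⟩
    exact Submodule.subset_span ⟨⟨m, C.comp f g⟩, by simp [M.act_comp]⟩
  have hv (m : Fin n) : v m ∈ S (d m) :=
    Submodule.subset_span ⟨⟨m, C.idm _⟩, by simp [M.act_id]⟩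
  exact Module.finite_def.2 (hgen S hS hv j ▸ Submodule.fg_span (Set.finite_range _))

lemma subFG_of_fintype {W : ∀ i, Submodule k (M.V i)} {ι : Type*} [Fintype ι] (d : ι → ℕ)
    (v : ∀ a, M.V (d a)) (hv : ∀ a, v a ∈ W (d a))
    (hgen : ∀ W', M.Closed W' → (∀ a, v a ∈ W' (d a)) → ∀ i, W i ≤ W' i) : M.SubFG W := by
  let e := (Fintype.equivFin ι).symm
  refine ⟨Fintype.card ι, fun m => d (e m), fun m => v (e m), fun m => hv _,
    fun W' hW' hv' => hgen W' hW' fun a => ?_⟩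
  obtain ⟨m, rfl⟩ := e.surjective a
  exact hv' m

theorem EventuallyGenerated.noetherian [IsNoetherianRing k] (hM : M.EventuallyGenerated)
    (hfin : ∀ j, Module.Finite k (M.V j)) : M.Noetherian := by
  intro W hW
  obtain ⟨n, hn⟩ := hM W hW
  have hfg (j : ℕ) : (W j).FG := IsNoetherian.noetherian (W j)
  choose S hS using hfg
  refine subFG_of_fintype (ι := Σ j : Fin (n + 1), S j) (fun a => a.1) (fun a => a.2.1)
    (fun a => hS _ ▸ Submodule.subset_span a.2.2) fun W' hW' hv j => ?_
  induction j using Nat.strong_induction_on with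
  | _ j ih =>
  rcases le_or_gt j n with hj | hj
  · rw [← hS j, Submodule.span_le]
    exact fun x hx => hv ⟨⟨j, Nat.lt_succ_of_le hj⟩, x, hx⟩
  · obtain ⟨l, rfl⟩ : ∃ l, j = l + 1 := ⟨j - 1, by omega⟩
    exact (hn l (by omega)).trans ((spanSucc_mono (ih l l.lt_succ_self)).trans
      (hW'.spanSucc_le l))

end CMod

namespace EICat

variable {k : Type} [Field k] {C : EICat} (α : ∀ j, C.Hom j (j + 1))

variable (k) in
noncomputable abbrev stabInvariants {i j : ℕ} (hij : i ≤ j) : Submodule k (C.Hom i j →₀ k) :=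
  permInvariants k (stabilizer (C.Hom j j) (C.alph α i hij)) (C.Hom i j)

variable {α}

theorem finrank_stabInvariants_succ_le (hT : C.TransCond) {i j : ℕ} (hij : i ≤ j)
    (hsurj : ∀ δ : C.Hom i (j + 1), ∃ γ, C.orbRelS α hij (C.comp (α j) γ) δ) :
    finrank k (stabInvariants k α (hij.trans j.le_succ)) ≤ finrank k (stabInvariants k α hij) := by
  refine finrank_permInvariants_le (φ := C.comp (α j)) (fun h => ?_) fun δ => ?_
  · obtain ⟨e, he⟩ := hT j (α j) (C.comp (α j) h)
    have he_mem : e ∈ stabilizer (C.Hom (j + 1) (j + 1)) (C.alph α i (hij.trans j.le_succ)) := by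
      rw [mem_stabilizer_iff, alph_succ α hij, smul_def, ← C.assoc, he, C.assoc]
      exact congrArg (C.comp (α j)) h.2
    refine ⟨⟨e, he_mem⟩, fun γ => ?_⟩
    change C.comp (α j) (C.comp h γ) = C.comp e (C.comp (α j) γ)
    rw [← C.assoc, ← he, C.assoc]
  · obtain ⟨γ, hγ⟩ := hsurj δ
    obtain ⟨h', hh'⟩ := (orbRelS_iff α hij _ _).1 hγ
    exact ⟨γ, h', hh'⟩

theorem finrank_inf_stabInvariants_le [CharZero k] {i j : ℕ} (hij : i ≤ j)
    (hinj : ∀ γ γ' : C.Hom i j,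
      C.orbRelS α hij (C.comp (α j) γ) (C.comp (α j) γ') → C.orbRel α hij γ γ')
    (U : ∀ l, Submodule k (C.Hom i l →₀ k)) :
    finrank k ↥(U j ⊓ stabInvariants k α hij) ≤
      finrank k ↥((CMod.free k C i).spanSucc U j ⊓ stabInvariants k α (hij.trans j.le_succ)) :=
  finrank_inf_permInvariants_le (φ := C.comp (α j))
    (fun γ γ' h' hh' => (orbRel_iff α hij _ _).1 (hinj γ γ' ((orbRelS_iff α hij _ _).2 ⟨h', hh'⟩)))
    (fun h' _ hy => CMod.act_mem_spanSucc_of_mem (h' : C.Hom (j + 1) (j + 1)) hy)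
    (fun _ hu => CMod.act_mem_spanSucc (M := CMod.free k C i) (α j) hu)

theorem le_spanSucc_of_finrank_le [CharZero k] (hA : C.TypeAInf) (hT : C.TransCond) {i j : ℕ}
    (hij : i ≤ j)
    (hinj : ∀ γ γ' : C.Hom i j,
      C.orbRelS α hij (C.comp (α j) γ) (C.comp (α j) γ') → C.orbRel α hij γ γ')
    {U : ∀ l, Submodule k (C.Hom i l →₀ k)} (hU : (CMod.free k C i).Closed U)
    (h : finrank k ↥(U (j + 1) ⊓ stabInvariants k α (hij.trans j.le_succ)) ≤
      finrank k ↥(U j ⊓ stabInvariants k α hij)) :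
    U (j + 1) ≤ (CMod.free k C i).spanSucc U j := by
  have := isPretransitive_of_typeAInf hA hT (hij.trans j.le_succ)
  let A : Subrepresentation (permRep k (C.Hom (j + 1) (j + 1)) (C.Hom i (j + 1))) :=
    ⟨(CMod.free k C i).spanSucc U j, fun e _ hx => CMod.act_mem_spanSucc_of_mem e hx⟩
  let B : Subrepresentation (permRep k (C.Hom (j + 1) (j + 1)) (C.Hom i (j + 1))) :=
    ⟨U (j + 1), fun e x hx => hU _ _ e x hx⟩
  have hAB : A ≤ B := hU.spanSucc_le j
  have hinf : A.toSubmodule ⊓ stabInvariants k α (hij.trans j.le_succ) =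
      B.toSubmodule ⊓ stabInvariants k α (hij.trans j.le_succ) :=
    Submodule.eq_of_le_of_finrank_le (inf_le_inf_right _ hAB)
      (h.trans (finrank_inf_stabInvariants_le hij hinj U))
  exact Subrepresentation.le_of_inf_permInvariants_le _ hAB (hinf ▸ inf_le_left)

theorem free_eventuallyGenerated [CharZero k] (hA : C.TypeAInf) (hT : C.TransCond)
    (hB : C.BijCond α) (i : ℕ) : (CMod.free k C i).EventuallyGenerated := by
  intro U hU
  obtain ⟨N, hμ⟩ := hB i
  have hij (t : ℕ) : i ≤ max i N + t := (le_max_left i N).trans (Nat.le_add_right _ t)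
  have hN (t : ℕ) := hμ (max i N + t) (hij t) ((le_max_right i N).trans (Nat.le_add_right _ t))
  let K (t : ℕ) := finrank k (stabInvariants k α (hij t))
  let c (t : ℕ) := finrank k ↥(U (max i N + t) ⊓ stabInvariants k α (hij t))
  have hK (t : ℕ) : K (t + 1) ≤ K t := finrank_stabInvariants_succ_le hT (hij t) (hN t).2
  have hc (t : ℕ) : c t ≤ c (t + 1) := (finrank_inf_stabInvariants_le (hij t) (hN t).1 U).trans
    (Submodule.finrank_mono (inf_le_inf_right _ (hU.spanSucc_le _)))
  have hcK (t : ℕ) : c t ≤ K t := Submodule.finrank_mono inf_le_right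
  -- `K - c` is antitone, hence eventually constant, and from then on `c` cannot grow.
  obtain ⟨T, hT₀⟩ := WellFoundedLT.antitone_chain_condition (f := fun t => K t - c t)
    (antitone_nat_of_succ_le fun t => by have := hK t; have := hc t; omega)
  refine ⟨max i N + T, fun j hj => ?_⟩
  obtain ⟨t, rfl⟩ : ∃ t, j = max i N + t := ⟨j - max i N, by omega⟩
  have h₁ := hT₀ t (by omega)
  have h₂ := hT₀ (t + 1) (by omega)
  have := hK t; have := hc t; have := hcK t; have := hcK (t + 1)
  exact le_spanSucc_of_finrank_le hA hT (hij t) (hN t).1 hU (show c (t + 1) ≤ c t by omega)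

end EICat

/-- Main theorem: let `C` be a locally finite EI category of
type `A∞` satisfying the transitivity and bijectivity conditions, and `k` a
field of characteristic 0. Then every finitely generated `kC`-module is
Noetherian. -/
theorem stmt_11 (k : Type) [Field k] [CharZero k]
    (C : EICat) (hA : C.TypeAInf) (hT : C.TransCond)
    (α : ∀ j, C.Hom j (j + 1)) (hB : C.BijCond α)
    (M : CMod k C) (hM : M.FG) : M.Noetherian :=
  (hM.eventuallyGenerated (EICat.free_eventuallyGenerated hA hT hB)).noetherian hM.finite
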